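/- Let d, T be positive integers, let L¹, …, L^N ∈ 𝕃, and let λ₁, …, λ_N > 0 with ∑_{i=1}^N λ_i = 1. Suppose that for each i, O_i ∈ argmin_{O ∈ 𝕆} ‖L − L^i O‖_F² for some L ∈ 𝕃, and set L' := ∑_{i=1}^N λ_i L^i O_i. Then one step of the alternating minimization does not increase the barycenter objective: ∑_{i=1}^N λ_i min_{O ∈ 𝕆} ‖L' − L^i O‖_F² ≤ ∑_{i=1}^N λ_i min_{O ∈ 𝕆} ‖L − L^i O‖_F². -/

import Mathlib

open Matrix

/-- Squared Frobenius norm of a real matrix: `‖A‖_F² = tr(Aᵀ A)`. -/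
noncomputable def frobSq {m n : Type*} [Fintype m] [Fintype n] (A : Matrix m n ℝ) : ℝ :=
  Matrix.trace (Aᵀ * A)

/-- `O ∈ O(d)`: a real orthogonal matrix. -/
def IsOrth {d : ℕ} (O : Matrix (Fin d) (Fin d) ℝ) : Prop :=
  O * Oᵀ = 1 ∧ Oᵀ * O = 1

/-- `L ∈ 𝕃`: block-lower triangular w.r.t. `T` blocks of size `d`
(indices are pairs `(i, t)` with `i : Fin d` the within-block index and `t : Fin T`
the block index); the block `L_{t,s}` vanishes for `t < s`. -/
def BlockLT {d T : ℕ} (L : Matrix (Fin d × Fin T) (Fin d × Fin T) ℝ) : Prop :=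
  ∀ p q : Fin d × Fin T, p.2 < q.2 → L p q = 0

/-- `O ∈ 𝕆`: block-diagonal with orthogonal `d × d` diagonal blocks. -/
def BlockOrth {d T : ℕ} (O : Matrix (Fin d × Fin T) (Fin d × Fin T) ℝ) : Prop :=
  ∃ f : Fin T → Matrix (Fin d) (Fin d) ℝ, (∀ t, IsOrth (f t)) ∧ O = Matrix.blockDiagonal f

/-- Truncated `t`-th column `L̃_t ∈ ℝ^{(T−t)d×d}` (0-based `t`): the rows of the `t`-th block
column of `L` from block row `t` on. -/
def truncCol {d T : ℕ} (L : Matrix (Fin d × Fin T) (Fin d × Fin T) ℝ) (t : Fin T) :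
    Matrix (Fin (T - t.val) × Fin d) (Fin d) ℝ :=
  fun p j => L (p.2, ⟨t.val + p.1.val, by have := p.1.isLt; omega⟩) (j, t)

/-- Column covariance `Σ̃_t^L = L̃_t L̃_tᵀ`. -/
noncomputable def colCov {d T : ℕ} (L : Matrix (Fin d × Fin T) (Fin d × Fin T) ℝ) (t : Fin T) :
    Matrix (Fin (T - t.val) × Fin d) (Fin (T - t.val) × Fin d) ℝ :=
  truncCol L t * (truncCol L t)ᵀ

/-- The positive semidefinite square root of a PSD matrix (junk value `0` otherwise). -/
noncomputable def sqrtPSD {n : Type*} [Fintype n] [DecidableEq n] (P : Matrix n n ℝ) :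
    Matrix n n ℝ :=
  by classical exact if h : P.PosSemidef then
    (h.1.eigenvectorUnitary : Matrix n n ℝ) * Matrix.diagonal (Real.sqrt ∘ h.1.eigenvalues) *
      (star (h.1.eigenvectorUnitary : Matrix n n ℝ)) else 0

/-- The Bures–Wasserstein distance between (PSD) matrices. -/
noncomputable def dBW {n : Type*} [Fintype n] [DecidableEq n] (S1 S2 : Matrix n n ℝ) : ℝ :=
  Real.sqrt (Matrix.trace S1 + Matrix.trace S2 -
    2 * Matrix.trace (sqrtPSD (sqrtPSD S2 * S1 * sqrtPSD S2)))

lemma frobSq_eq {m n : Type*} [Fintype m] [Fintype n] (A : Matrix m n ℝ) :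
    frobSq A = ∑ j, ∑ p, (A p j) ^ 2 := by
  unfold frobSq Matrix.trace
  simp [Matrix.mul_apply, Matrix.diag, sq]

lemma frobSq_nonneg {m n : Type*} [Fintype m] [Fintype n] (A : Matrix m n ℝ) :
    0 ≤ frobSq A := by
  rw [frobSq_eq]
  positivity

lemma scalar_bary {N : ℕ} (lam a : Fin N → ℝ) (hsum : ∑ i, lam i = 1) (m : ℝ) :
    ∑ i, lam i * ((∑ j, lam j * a j) - a i) ^ 2 ≤ ∑ i, lam i * (m - a i) ^ 2 := by
  set ab := ∑ j, lam j * a j with hab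
  have key : ∑ i, (lam i * (m - a i) ^ 2 - lam i * (ab - a i) ^ 2)
      = (m ^ 2 - ab ^ 2) * (∑ i, lam i) - 2 * (m - ab) * ∑ i, lam i * a i := by
    rw [Finset.mul_sum, Finset.mul_sum, ← Finset.sum_sub_distrib]
    apply Finset.sum_congr rfl
    intro i _
    ring
  rw [hsum, ← hab] at key
  have h2 : ∑ i, (lam i * (m - a i) ^ 2 - lam i * (ab - a i) ^ 2) = (m - ab) ^ 2 := by
    rw [key]; ring
  rw [Finset.sum_sub_distrib] at h2
  nlinarith [sq_nonneg (m - ab)]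

/-- One step of alternating minimization does not increase the adapted
barycenter objective: if each `Oᵢ` minimizes `O ↦ ‖L − LⁱO‖_F²` over `𝕆` and
`L' = ∑ᵢ λᵢ Lⁱ Oᵢ`, then `∑ᵢ λᵢ min_{O ∈ 𝕆} ‖L' − LⁱO‖_F² ≤ ∑ᵢ λᵢ min_{O ∈ 𝕆} ‖L − LⁱO‖_F²`. -/
theorem stmt15 (d T N : ℕ) (hd : 0 < d) (hT : 0 < T)
    (L : Fin N → Matrix (Fin d × Fin T) (Fin d × Fin T) ℝ) (hL : ∀ i, BlockLT (L i))
    (lam : Fin N → ℝ) (hlam : ∀ i, 0 < lam i) (hsum : ∑ i, lam i = 1)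
    (K : Matrix (Fin d × Fin T) (Fin d × Fin T) ℝ) (hK : BlockLT K)
    (O : Fin N → Matrix (Fin d × Fin T) (Fin d × Fin T) ℝ)
    (hO : ∀ i, BlockOrth (O i) ∧
      ∀ Q, BlockOrth Q → frobSq (K - L i * O i) ≤ frobSq (K - L i * Q)) :
    (∑ i, lam i * sInf {x : ℝ | ∃ Q, BlockOrth Q ∧
        x = frobSq ((∑ j, lam j • (L j * O j)) - L i * Q)})
      ≤ ∑ i, lam i * sInf {x : ℝ | ∃ Q, BlockOrth Q ∧ x = frobSq (K - L i * Q)} := by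
  set M := ∑ j, lam j • (L j * O j) with hM
  -- RHS infimum equals the value at O i
  have hRHS : ∀ i, sInf {x : ℝ | ∃ Q, BlockOrth Q ∧ x = frobSq (K - L i * Q)}
      = frobSq (K - L i * O i) := by
    intro i
    apply le_antisymm
    · apply csInf_le
      · exact ⟨0, by rintro x ⟨Q, hQ, rfl⟩; exact frobSq_nonneg _⟩
      · exact ⟨O i, (hO i).1, rfl⟩
    · refine le_csInf ?_ ?_
      · exact ⟨_, ⟨O i, (hO i).1, rfl⟩⟩
      rintro x ⟨Q, hQ, rfl⟩
      exact (hO i).2 Q hQ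
  have hLHS : ∀ i, sInf {x : ℝ | ∃ Q, BlockOrth Q ∧ x = frobSq (M - L i * Q)}
      ≤ frobSq (M - L i * O i) := by
    intro i
    apply csInf_le
    · exact ⟨0, by rintro x ⟨Q, hQ, rfl⟩; exact frobSq_nonneg _⟩
    · exact ⟨O i, (hO i).1, rfl⟩
  simp_rw [hRHS]
  have step : ∑ i, lam i * frobSq (M - L i * O i) ≤ ∑ i, lam i * frobSq (K - L i * O i) := by
    simp_rw [frobSq_eq, Finset.mul_sum]
    rw [Finset.sum_comm]
    conv_rhs => rw [Finset.sum_comm]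
    apply Finset.sum_le_sum
    intro q _
    rw [Finset.sum_comm]
    conv_rhs => rw [Finset.sum_comm]
    apply Finset.sum_le_sum
    intro p _
    have hM' : ∀ i : Fin N, (M - L i * O i) p q
        = (∑ j, lam j * (L j * O j) p q) - (L i * O i) p q := by
      intro i
      rw [hM, Matrix.sub_apply, Matrix.sum_apply]
      simp [Matrix.smul_apply]
    have hK' : ∀ i : Fin N, (K - L i * O i) p q = K p q - (L i * O i) p q := by
      intro i; simp [Matrix.sub_apply]
    simp_rw [hM', hK']
    exact scalar_bary lam (fun i => (L i * O i) p q) hsum (K p q)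
  calc ∑ i, lam i * sInf {x : ℝ | ∃ Q, BlockOrth Q ∧ x = frobSq (M - L i * Q)}
      ≤ ∑ i, lam i * frobSq (M - L i * O i) := by
        apply Finset.sum_le_sum
        intro i _
        exact mul_le_mul_of_nonneg_left (hLHS i) (hlam i).le
    _ ≤ ∑ i, lam i * frobSq (K - L i * O i) := step
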